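/- arXiv:1011.6140 — 2 statements merged into one kernel-verified Lean document; each statement's English description precedes it below -/
import Mathlib

section
/- The dyadic twisted paraproduct does not map L^∞(R^2) × L^∞(R^2) to L^∞(R^2): there is no constant C such that ‖T_d(F,G)‖_{L^∞} ≤ C ‖F‖_{L^∞} ‖G‖_{L^∞} for all bounded compactly supported F, G. Specifically, for each positive integer n, taking F := 1 on the set (∪_{j=0}^{n-1} [2^{-2j-1}, 2^{-2j})) × [0,1) and 0 elsewhere, and G(x,y) := F(y,x), one has |T_d(F,G)(x,y)| ≳ n for (x,y) ∈ [0, 2^{-2n})^2, while ‖F‖_{L^∞} = ‖G‖_{L^∞} = 1. -/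
open MeasureTheory Set
open scoped Classical

noncomputable section

/-- The dyadic interval `[2^k l, 2^k (l+1))`. -/
def dIco (k l : ℤ) : Set ℝ := Set.Ico ((2:ℝ)^k * l) ((2:ℝ)^k * (l+1))

/-- The Haar scaling function `φ_I = |I|^{-1/2} 1_I` of the dyadic interval `I = [2^k l, 2^k(l+1))`. -/
def haarPhi (k l : ℤ) (x : ℝ) : ℝ :=
  if x ∈ dIco k l then (Real.sqrt ((2:ℝ)^k))⁻¹ else 0

/-- The Haar wavelet `ψ_I = |I|^{-1/2} (1_{I_left} - 1_{I_right})`. -/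
def haarPsi (k l : ℤ) (x : ℝ) : ℝ :=
  if x ∈ dIco (k-1) (2*l) then (Real.sqrt ((2:ℝ)^k))⁻¹
  else if x ∈ dIco (k-1) (2*l+1) then -(Real.sqrt ((2:ℝ)^k))⁻¹ else 0

/-- The dyadic martingale average `E_k f` at scale `2^{-k}`:
`(E_k f)(x) = (1/|I|) ∫_I f` where `I ∋ x` is the dyadic interval of length `2^{-k}`. -/
def Ek (k : ℤ) (f : ℝ → ℝ) (x : ℝ) : ℝ :=
  (2:ℝ)^k * ∫ t in dIco (-k) ⌊(2:ℝ)^k * x⌋, f t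

/-- `E_k` acting in the first variable of a function on `ℝ²`. -/
def Ek1 (k : ℤ) (F : ℝ × ℝ → ℝ) (p : ℝ × ℝ) : ℝ := Ek k (fun u => F (u, p.2)) p.1

/-- `E_k` acting in the second variable of a function on `ℝ²`. -/
def Ek2 (k : ℤ) (F : ℝ × ℝ → ℝ) (p : ℝ × ℝ) : ℝ := Ek k (fun v => F (p.1, v)) p.2

/-- The martingale difference `Δ_k = E_{k+1} − E_k` in the first variable. -/
def Dk1 (k : ℤ) (F : ℝ × ℝ → ℝ) (p : ℝ × ℝ) : ℝ := Ek1 (k+1) F p - Ek1 k F p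

/-- The martingale difference `Δ_k = E_{k+1} − E_k` in the second variable. -/
def Dk2 (k : ℤ) (F : ℝ × ℝ → ℝ) (p : ℝ × ℝ) : ℝ := Ek2 (k+1) F p - Ek2 k F p

/-- The dyadic twisted paraproduct `T_d(F,G) = Σ_k (E_k^{(1)}F)(Δ_k^{(2)}G)`. -/
def Td (F G : ℝ × ℝ → ℝ) (p : ℝ × ℝ) : ℝ := ∑' k : ℤ, Ek1 k F p * Dk2 k G p

/-- The counterexample function: the indicator of `(∪_{j<n} [2^{-2j-1}, 2^{-2j})) × [0,1)`. -/
def F14 (n : ℕ) (p : ℝ × ℝ) : ℝ :=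
  if (∃ j < n, p.1 ∈ Set.Ico ((2:ℝ)^(-(2*(j:ℤ))-1)) ((2:ℝ)^(-(2*(j:ℤ))))) ∧
      p.2 ∈ Set.Ico (0:ℝ) 1 then 1 else 0

/-- Its reflection `G(x,y) = F(y,x)`. -/
def G14 (n : ℕ) (p : ℝ × ℝ) : ℝ := F14 n (p.2, p.1)

/-
On the square `[0, 2^{-2n})²` the averages `E_k^{(1)} F` and `E_k^{(2)} G` both equal
`a_k = 2^k |[0, 2^{-k}) ∩ ⋃_{j<n} [2^{-2j-1}, 2^{-2j})|`, which is geometric for `k ≤ 0` and vanishes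
for `k ≥ 2n`. Since `a_k (a_{k+1} - a_k) = (a_{k+1}^2 - a_k^2)/2 - (a_{k+1} - a_k)^2/2`, the series
telescopes to `T_d(F,G) = -a_0^2/6 - ½ Σ_{0 ≤ k < 2n} (a_{k+1} - a_k)^2`. Passing from scale `2j` to
`2j+1` loses the `j`-th interval, which carries half of the average, so `a` drops by at least `1/3`
there and `T_d(F,G) ≤ -n/18`, while `|F|, |G| ≤ 1`.
-/

lemma two_zpow_pos (k : ℤ) : (0:ℝ) < 2 ^ k := zpow_pos two_pos k

lemma two_zpow_le_two_zpow {a b : ℤ} (h : a ≤ b) : (2:ℝ) ^ a ≤ 2 ^ b :=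
  zpow_le_zpow_right₀ one_le_two h

lemma two_zpow_mul_two_zpow_neg (k : ℤ) : (2:ℝ) ^ k * 2 ^ (-k) = 1 := by
  rw [← zpow_add₀ two_ne_zero, add_neg_cancel, zpow_zero]

lemma two_zpow_neg_two_mul (j : ℕ) : (2:ℝ) ^ (-(2 * (j:ℤ))) = (1/4) ^ j := by
  rw [zpow_neg, zpow_mul, zpow_natCast]; norm_num [div_pow]

lemma tsum_mul_sub_eq {a : ℤ → ℝ} {N : ℕ} (hneg : ∀ k ≤ 0, a k = 2 ^ k * a 0)
    (hpos : ∀ k : ℤ, N ≤ k → a k = 0) :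
    ∑' k, a k * (a (k + 1) - a k)
      = -(a 0 ^ 2 / 6) - ∑ m ∈ Finset.range N, (a (m + 1) - a m) ^ 2 / 2 := by
  have hnat : HasSum (fun m : ℕ => a m * (a (m + 1) - a m))
      (∑ m ∈ Finset.range N, a m * (a (m + 1) - a m)) :=
    hasSum_sum_of_ne_finset_zero fun m hm => by
      rw [hpos m (by simpa using hm), zero_mul]
  have hgeom : HasSum (fun m : ℕ => a (-(m + 1)) * (a (-(m + 1) + 1) - a (-(m + 1))))
      (a 0 ^ 2 / 3) := by
    have hterm (m : ℕ) : a (-(m + 1)) * (a (-(m + 1) + 1) - a (-(m + 1)))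
        = a 0 ^ 2 / 4 * (1/4) ^ m := by
      have hhalf : (2:ℝ) ^ (-((m:ℤ) + 1)) = (1/2) ^ (m + 1) := by
        rw [zpow_neg, ← Nat.cast_succ, zpow_natCast]; norm_num [div_pow]
      have hquarter : (1/4:ℝ) ^ m = ((1/2) ^ m) ^ 2 := by
        rw [← pow_mul, mul_comm, pow_mul]; norm_num
      rw [hneg (-(m + 1) + 1) (by omega), zpow_add_one₀ two_ne_zero, hneg (-(m + 1)) (by omega),
        hhalf, hquarter]
      ring
    simp_rw [hterm]
    rw [show a 0 ^ 2 / 3 = a 0 ^ 2 / 4 * (1 - 1/4 : ℝ)⁻¹ by norm_num; ring]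
    exact (hasSum_geometric_of_lt_one (by norm_num) (by norm_num)).mul_left _
  have htelescope : ∑ m ∈ Finset.range N, a m * (a (m + 1) - a m)
      = -(a 0 ^ 2 / 2) - ∑ m ∈ Finset.range N, (a (m + 1) - a m) ^ 2 / 2 := by
    have hsq := Finset.sum_range_sub (fun m : ℕ => a m ^ 2 / 2) N
    simp only [Nat.cast_succ, Nat.cast_zero, hpos N le_rfl] at hsq
    calc ∑ m ∈ Finset.range N, a m * (a (m + 1) - a m)
        = ∑ m ∈ Finset.range N, ((a (m + 1) ^ 2 / 2 - a m ^ 2 / 2) - (a (m + 1) - a m) ^ 2 / 2) :=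
          Finset.sum_congr rfl fun m _ => by ring
      _ = _ := by rw [Finset.sum_sub_distrib, hsq]; ring
  rw [(HasSum.of_nat_of_neg_add_one (f := fun k => a k * (a (k + 1) - a k)) hnat hgeom).tsum_eq,
    htelescope]
  ring

lemma sum_range_even_le_sum_range_two_mul {f : ℕ → ℝ} (hf : ∀ m, 0 ≤ f m) (n : ℕ) :
    ∑ i ∈ Finset.range n, f (2 * i) ≤ ∑ m ∈ Finset.range (2 * n), f m := by
  induction n with
  | zero => simp
  | succ n ih =>
    rw [Finset.sum_range_succ, mul_add_one, Finset.sum_range_succ, Finset.sum_range_succ]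
    linarith [hf (2 * n + 1)]

lemma ofReal_le_eLpNorm_top {α : Type*} [MeasurableSpace α] {μ : Measure α} {f : α → ℝ}
    {s : Set α} (hs : μ s ≠ 0) {c : ℝ} (hc : ∀ p ∈ s, c ≤ |f p|) :
    ENNReal.ofReal c ≤ eLpNorm f ⊤ μ := by
  obtain ⟨p, hp, hle⟩ := Measure.exists_mem_of_measure_ne_zero_of_ae hs
    (ae_restrict_of_ae (ae_le_eLpNormEssSup (f := f) (μ := μ)))
  rw [eLpNorm_exponent_top]
  refine le_trans ?_ hle
  rw [← ofReal_norm, Real.norm_eq_abs]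
  exact ENNReal.ofReal_le_ofReal (hc p hp)

lemma eLpNorm_top_le_one {α : Type*} [MeasurableSpace α] {μ : Measure α} {f : α → ℝ}
    (hf : ∀ p, |f p| ≤ 1) : eLpNorm f ⊤ μ ≤ 1 := by
  rw [eLpNorm_exponent_top]
  simpa using eLpNormEssSup_le_of_ae_bound (μ := μ) (C := 1) (ae_of_all _ hf)

lemma Ek_of_mem_Ico {k : ℤ} {x : ℝ} (hx : x ∈ Ico 0 ((2:ℝ) ^ (-k))) (f : ℝ → ℝ) :
    Ek k f x = 2 ^ k * ∫ t in Ico 0 ((2:ℝ) ^ (-k)), f t := by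
  have hfloor : ⌊(2:ℝ) ^ k * x⌋ = 0 := by
    rw [Int.floor_eq_zero_iff]
    refine ⟨mul_nonneg (two_zpow_pos k).le hx.1, ?_⟩
    calc (2:ℝ) ^ k * x < 2 ^ k * 2 ^ (-k) := mul_lt_mul_of_pos_left hx.2 (two_zpow_pos k)
      _ = 1 := two_zpow_mul_two_zpow_neg k
  simp [Ek, hfloor, dIco]

lemma dIco_floor_subset_Ico {m : ℤ} (d : ℕ) {x : ℝ} (hx : x ∈ Ico 0 ((2:ℝ) ^ (-m))) :
    dIco (-(m + d)) ⌊(2:ℝ) ^ (m + d) * x⌋ ⊆ Ico 0 ((2:ℝ) ^ (-m)) := by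
  set l := ⌊(2:ℝ) ^ (m + d) * x⌋
  have hl_nonneg : (0:ℝ) ≤ l := by
    exact_mod_cast Int.floor_nonneg.mpr (mul_nonneg (two_zpow_pos _).le hx.1)
  have hl_lt : l < (2:ℤ) ^ d := by
    rw [Int.floor_lt]
    calc (2:ℝ) ^ (m + d) * x < 2 ^ (m + d) * 2 ^ (-m) :=
          mul_lt_mul_of_pos_left hx.2 (two_zpow_pos _)
      _ = 2 ^ d := by rw [← zpow_add₀ two_ne_zero, add_neg_cancel_comm, zpow_natCast]
      _ = ((2:ℤ) ^ d : ℤ) := by push_cast; rfl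
  have hl_succ : (l:ℝ) + 1 ≤ 2 ^ d := by exact_mod_cast hl_lt
  intro t ⟨ht₀, ht₁⟩
  refine ⟨(mul_nonneg (two_zpow_pos _).le hl_nonneg).trans ht₀, ht₁.trans_le ?_⟩
  calc (2:ℝ) ^ (-(m + d)) * (l + 1) ≤ 2 ^ (-(m + d)) * 2 ^ d :=
        mul_le_mul_of_nonneg_left hl_succ (two_zpow_pos _).le
    _ = 2 ^ (-m) := by rw [← zpow_natCast, ← zpow_add₀ two_ne_zero]; ring_nf

lemma measurableSet_dIco {k l : ℤ} : MeasurableSet (dIco k l) := measurableSet_Ico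

lemma Ek_eq_zero_of_eqOn_Ico {m k : ℤ} (hmk : m ≤ k) {f : ℝ → ℝ}
    (hf : EqOn f 0 (Ico 0 ((2:ℝ) ^ (-m)))) {x : ℝ} (hx : x ∈ Ico 0 ((2:ℝ) ^ (-m))) :
    Ek k f x = 0 := by
  obtain ⟨d, rfl⟩ := Int.exists_add_of_le hmk
  rw [Ek, setIntegral_congr_fun measurableSet_dIco (hf.mono (dIco_floor_subset_Ico d hx))]
  simp


def f14Piece (j : ℕ) : Set ℝ := Ico ((2:ℝ) ^ (-(2 * (j:ℤ)) - 1)) ((2:ℝ) ^ (-(2 * (j:ℤ))))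

lemma measurableSet_f14Piece {j : ℕ} : MeasurableSet (f14Piece j) := measurableSet_Ico

/-- `∫_{[0, 2^{-k})} F14 n (·, y)` for `y ∈ [0, 1)`: the `j`-th piece lies in `[0, 2^{-k})` when
`k ≤ 2j` and is disjoint from it otherwise. -/
def f14Mass (n : ℕ) (k : ℤ) : ℝ :=
  ∑ j ∈ Finset.range n, if k ≤ 2 * (j:ℤ) then (2:ℝ) ^ (-(2 * (j:ℤ)) - 1) else 0

def f14Avg (n : ℕ) (k : ℤ) : ℝ := 2 ^ k * f14Mass n k

lemma disjoint_f14Piece {i j : ℕ} (h : i < j) : Disjoint (f14Piece i) (f14Piece j) :=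
  Set.disjoint_left.mpr fun _ hi hj =>
    hj.2.not_ge ((two_zpow_le_two_zpow (by omega)).trans hi.1)

lemma F14_eq_sum_indicator (n : ℕ) {y : ℝ} (hy : y ∈ Ico (0:ℝ) 1) (t : ℝ) :
    F14 n (t, y) = ∑ j ∈ Finset.range n, (f14Piece j).indicator 1 t := by
  by_cases h : ∃ j < n, t ∈ f14Piece j
  · obtain ⟨j, hj, ht⟩ := h
    rw [F14, if_pos ⟨⟨j, hj, ht⟩, hy⟩, Finset.sum_eq_single_of_mem j (Finset.mem_range.mpr hj)]
    · simp [indicator_of_mem ht]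
    · intro i _ hij
      refine indicator_of_notMem (fun hi => ?_) _
      rcases lt_or_gt_of_ne hij with hlt | hlt
      exacts [Set.disjoint_left.mp (disjoint_f14Piece hlt) hi ht,
        Set.disjoint_left.mp (disjoint_f14Piece hlt) ht hi]
  · rw [F14, if_neg (fun h' => h h'.1)]
    refine (Finset.sum_eq_zero fun j hj => indicator_of_notMem (fun ht => ?_) _).symm
    exact h ⟨j, Finset.mem_range.mp hj, ht⟩

lemma integral_indicator_f14Piece (k : ℤ) (j : ℕ) :
    ∫ t in Ico 0 ((2:ℝ) ^ (-k)), (f14Piece j).indicator 1 t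
      = if k ≤ 2 * (j:ℤ) then (2:ℝ) ^ (-(2 * (j:ℤ)) - 1) else 0 := by
  rw [integral_indicator_one measurableSet_f14Piece,
    measureReal_restrict_apply measurableSet_f14Piece, f14Piece, Ico_inter_Ico, measureReal_def,
    Real.volume_Ico, sup_eq_left.mpr (two_zpow_pos _).le]
  split_ifs with h
  · have hhalf : (2:ℝ) ^ (-(2 * (j:ℤ))) = 2 * 2 ^ (-(2 * (j:ℤ)) - 1) := by
      rw [← zpow_one_add₀ two_ne_zero]; ring_nf
    rw [inf_eq_left.mpr (two_zpow_le_two_zpow (by omega)), hhalf,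
      ENNReal.toReal_ofReal (by linarith [two_zpow_pos (-(2 * (j:ℤ)) - 1)])]
    ring
  · rw [inf_eq_right.mpr (two_zpow_le_two_zpow (by omega)), ENNReal.ofReal_eq_zero.mpr
      (by linarith [two_zpow_le_two_zpow (show -k ≤ -(2 * (j:ℤ)) - 1 by omega)]),
      ENNReal.toReal_zero]

lemma integral_F14 (n : ℕ) {y : ℝ} (hy : y ∈ Ico (0:ℝ) 1) (k : ℤ) :
    ∫ t in Ico 0 ((2:ℝ) ^ (-k)), F14 n (t, y) = f14Mass n k := by
  simp_rw [F14_eq_sum_indicator n hy]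
  rw [integral_finsetSum _ fun j _ => (integrable_const 1).indicator measurableSet_f14Piece]
  exact Finset.sum_congr rfl fun j _ => integral_indicator_f14Piece k j

lemma F14_eq_zero_of_lt {n : ℕ} {t : ℝ} (ht : t < (2:ℝ) ^ (-(2 * (n:ℤ)))) (y : ℝ) :
    F14 n (t, y) = 0 := by
  rw [F14, if_neg]
  rintro ⟨⟨j, hj, htj⟩, -⟩
  exact htj.1.not_gt (ht.trans_le (two_zpow_le_two_zpow (by omega)))

lemma f14Avg_eq_zero {n : ℕ} {k : ℤ} (hk : 2 * (n:ℤ) - 1 ≤ k) : f14Avg n k = 0 := by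
  rw [f14Avg, f14Mass, Finset.sum_eq_zero fun j hj => if_neg (by simp at hj; omega), mul_zero]

lemma f14Avg_of_nonpos (n : ℕ) {k : ℤ} (hk : k ≤ 0) : f14Avg n k = 2 ^ k * f14Avg n 0 := by
  rw [f14Avg, f14Avg, zpow_zero, one_mul, f14Mass, f14Mass]
  congr 1
  exact Finset.sum_congr rfl fun j _ => by rw [if_pos (by omega), if_pos (by omega)]

lemma Ek1_F14 (n : ℕ) (k : ℤ) {p : ℝ × ℝ} (hx : p.1 ∈ Ico 0 ((2:ℝ) ^ (-(2 * (n:ℤ)))))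
    (hy : p.2 ∈ Ico (0:ℝ) 1) : Ek1 k (F14 n) p = f14Avg n k := by
  rcases le_or_gt k (2 * n) with hk | hk
  · have hx' : p.1 ∈ Ico 0 ((2:ℝ) ^ (-k)) :=
      ⟨hx.1, hx.2.trans_le (two_zpow_le_two_zpow (by omega))⟩
    rw [Ek1, Ek_of_mem_Ico hx', integral_F14 n hy, f14Avg]
  · rw [f14Avg_eq_zero (by omega), Ek1]
    exact Ek_eq_zero_of_eqOn_Ico hk.le (fun t ht => F14_eq_zero_of_lt ht.2 _) hx

lemma f14Mass_succ_le (n i : ℕ) : f14Mass n (2 * i + 1) ≤ (2:ℝ) ^ (-(2 * (i:ℤ))) / 6 := by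
  have hquarter (j : ℕ) : (2:ℝ) ^ (-(2 * (j:ℤ)) - 1) = (1/4) ^ j / 2 := by
    rw [zpow_sub₀ two_ne_zero, two_zpow_neg_two_mul, zpow_one]
  have htail : f14Mass n (2 * i + 1) = (∑ j ∈ Finset.Ico (i + 1) n, (1/4:ℝ) ^ j) / 2 := by
    rw [f14Mass, ← Finset.sum_filter, Finset.sum_div]
    refine Finset.sum_congr ?_ fun j _ => hquarter j
    ext j
    simp only [Finset.mem_filter, Finset.mem_range, Finset.mem_Ico]
    omega
  have hgeom := geom_sum_Ico_le_of_lt_one (m := i + 1) (n := n) (x := (1/4:ℝ))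
    (by norm_num) (by norm_num)
  rw [pow_succ] at hgeom
  rw [htail, two_zpow_neg_two_mul]
  linarith [show (1/4:ℝ) ^ i * (1/4) / (1 - 1/4) = (1/4) ^ i / 3 by ring]

lemma f14Avg_jump (n : ℕ) {i : ℕ} (hi : i < n) :
    f14Avg n (2 * i + 1) - f14Avg n (2 * i) ≤ -(1/3) := by
  have hsplit : f14Mass n (2 * i) = 2 ^ (-(2 * (i:ℤ)) - 1) + f14Mass n (2 * i + 1) := by
    rw [f14Mass, f14Mass, ← Finset.add_sum_erase _ _ (Finset.mem_range.mpr hi), if_pos le_rfl,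
      ← Finset.add_sum_erase _ _ (Finset.mem_range.mpr hi), if_neg (by omega), zero_add]
    congr 1
    exact Finset.sum_congr rfl fun j hj => by
      have := Finset.ne_of_mem_erase hj
      split_ifs <;> first | rfl | omega
  have hcancel : (2:ℝ) ^ (2 * (i:ℤ)) * 2 ^ (-(2 * (i:ℤ)) - 1) = 1/2 := by
    rw [← zpow_add₀ two_ne_zero, show 2 * (i:ℤ) + (-(2 * i) - 1) = -1 by ring]; norm_num
  have htail : (2:ℝ) ^ (2 * (i:ℤ)) * f14Mass n (2 * i + 1) ≤ 1/6 := by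
    calc (2:ℝ) ^ (2 * (i:ℤ)) * f14Mass n (2 * i + 1)
        ≤ 2 ^ (2 * (i:ℤ)) * (2 ^ (-(2 * (i:ℤ))) / 6) :=
          mul_le_mul_of_nonneg_left (f14Mass_succ_le n i) (two_zpow_pos _).le
      _ = 1/6 := by rw [mul_div_assoc', two_zpow_mul_two_zpow_neg]
  rw [f14Avg, f14Avg, hsplit, zpow_add_one₀ two_ne_zero, mul_add, hcancel]
  linarith

lemma Td_F14_G14_le (n : ℕ) {p : ℝ × ℝ}
    (hp : p ∈ Ico 0 ((2:ℝ) ^ (-(2 * (n:ℤ)))) ×ˢ Ico 0 ((2:ℝ) ^ (-(2 * (n:ℤ))))) :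
    Td (F14 n) (G14 n) p ≤ -(n / 18) := by
  have hunit : Ico 0 ((2:ℝ) ^ (-(2 * (n:ℤ)))) ⊆ Ico 0 1 := fun t ht =>
    ⟨ht.1, ht.2.trans_le (by simpa using two_zpow_le_two_zpow (show -(2 * (n:ℤ)) ≤ 0 by omega))⟩
  have hE1 (k : ℤ) : Ek1 k (F14 n) p = f14Avg n k := Ek1_F14 n k hp.1 (hunit hp.2)
  have hE2 (k : ℤ) : Ek2 k (G14 n) p = f14Avg n k := Ek1_F14 n k (p := p.swap) hp.2 (hunit hp.1)
  have hjumps : ∑ i ∈ Finset.range n, (1/9:ℝ)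
      ≤ ∑ i ∈ Finset.range n, (f14Avg n ((2 * i : ℕ) + 1) - f14Avg n (2 * i : ℕ)) ^ 2 :=
    Finset.sum_le_sum fun i hi => by
      have := f14Avg_jump n (Finset.mem_range.mp hi)
      push_cast
      nlinarith
  have heven := sum_range_even_le_sum_range_two_mul
    (f := fun m => (f14Avg n ((m : ℤ) + 1) - f14Avg n m) ^ 2) (fun m => sq_nonneg _) n
  simp only [Td, Dk2, hE1, hE2]
  rw [tsum_mul_sub_eq (N := 2 * n) (fun k hk => f14Avg_of_nonpos n hk)
    (fun k hk => f14Avg_eq_zero (by push_cast at hk; omega)), ← Finset.sum_div]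
  simp only [Finset.sum_const, Finset.card_range, nsmul_eq_mul] at hjumps
  linarith [sq_nonneg (f14Avg n 0)]

lemma abs_F14_le_one (n : ℕ) (p : ℝ × ℝ) : |F14 n p| ≤ 1 := by
  rw [F14]; split_ifs <;> norm_num

lemma measurable_F14 (n : ℕ) : Measurable (F14 n) := by
  refine Measurable.ite ?_ measurable_const measurable_const
  convert (MeasurableSet.biUnion (to_countable (Iio n)) fun j _ =>
    measurableSet_f14Piece (j := j)).prod (measurableSet_Ico (a := (0:ℝ)) (b := 1)) using 1
  ext p
  simp only [mem_prod, mem_iUnion, mem_Iio, exists_prop, f14Piece]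
  rfl

lemma hasCompactSupport_F14 (n : ℕ) : HasCompactSupport (F14 n) := by
  refine HasCompactSupport.intro (isCompact_Icc.prod isCompact_Icc :
    IsCompact (Icc (0:ℝ) 1 ×ˢ Icc (0:ℝ) 1)) fun p hp => ?_
  rw [F14, if_neg]
  rintro ⟨⟨j, -, hj⟩, hy⟩
  have hle : (2:ℝ) ^ (-(2 * (j:ℤ))) ≤ 1 := by
    simpa using two_zpow_le_two_zpow (show -(2 * (j:ℤ)) ≤ 0 by omega)
  exact hp ⟨⟨(two_zpow_pos _).le.trans hj.1, hj.2.le.trans hle⟩, hy.1, hy.2.le⟩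

/-- **`T_d` does not map `L^∞ × L^∞` to `L^∞`:** there is no constant `C` with
`‖T_d(F,G)‖_∞ ≤ C ‖F‖_∞ ‖G‖_∞` for all bounded compactly supported measurable `F, G`.
Specifically, for the indicator functions `F14 n` and `G14 n` one has
`|T_d(F,G)| ≳ n` on the square `[0, 2^{-2n})²` while `‖F‖_∞ = ‖G‖_∞ = 1`. -/
theorem Td_not_bounded_Linfty :
    (¬ ∃ C : ℝ, ∀ F G : ℝ × ℝ → ℝ, Measurable F → Measurable G →
      HasCompactSupport F → HasCompactSupport G →
      (∃ M : ℝ, ∀ p, |F p| ≤ M) → (∃ M : ℝ, ∀ p, |G p| ≤ M) →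
      MeasureTheory.eLpNorm (Td F G) ⊤ MeasureTheory.volume ≤
        ENNReal.ofReal C * MeasureTheory.eLpNorm F ⊤ MeasureTheory.volume *
          MeasureTheory.eLpNorm G ⊤ MeasureTheory.volume) ∧
    (∃ c : ℝ, 0 < c ∧ ∀ n : ℕ, 1 ≤ n →
      ∀ p : ℝ × ℝ,
        p ∈ Set.Ico (0:ℝ) ((2:ℝ)^(-(2*(n:ℤ)))) ×ˢ Set.Ico (0:ℝ) ((2:ℝ)^(-(2*(n:ℤ)))) →
        c * n ≤ |Td (F14 n) (G14 n) p|) := by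
  have hlower (n : ℕ) (p : ℝ × ℝ)
      (hp : p ∈ Ico 0 ((2:ℝ) ^ (-(2 * (n:ℤ)))) ×ˢ Ico 0 ((2:ℝ) ^ (-(2 * (n:ℤ))))) :
      1/18 * n ≤ |Td (F14 n) (G14 n) p| := by
    linarith [neg_abs_le (Td (F14 n) (G14 n) p), Td_F14_G14_le n hp]
  refine ⟨?_, 1/18, by norm_num, fun n _ => hlower n⟩
  rintro ⟨C, hC⟩
  obtain ⟨n, hn⟩ := exists_nat_gt (18 * |C|)
  have hsquare : volume (Ico 0 ((2:ℝ) ^ (-(2 * (n:ℤ)))) ×ˢ Ico 0 ((2:ℝ) ^ (-(2 * (n:ℤ))))) ≠ 0 := by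
    simp [Measure.volume_eq_prod, Measure.prod_prod, two_zpow_pos]
  have hbound : ENNReal.ofReal (1/18 * n) ≤ ENNReal.ofReal C :=
    calc ENNReal.ofReal (1/18 * n)
        ≤ eLpNorm (Td (F14 n) (G14 n)) ⊤ volume := ofReal_le_eLpNorm_top hsquare (hlower n)
      _ ≤ ENNReal.ofReal C * eLpNorm (F14 n) ⊤ volume * eLpNorm (G14 n) ⊤ volume :=
        hC _ _ (measurable_F14 n) ((measurable_F14 n).comp measurable_swap)
          (hasCompactSupport_F14 n)
          ((hasCompactSupport_F14 n).comp_homeomorph (Homeomorph.prodComm ℝ ℝ))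
          ⟨1, abs_F14_le_one n⟩ ⟨1, fun p => abs_F14_le_one n p.swap⟩
      _ ≤ ENNReal.ofReal C * 1 * 1 := by
        gcongr <;> exact eLpNorm_top_le_one fun p => abs_F14_le_one n _
      _ = ENNReal.ofReal C := by rw [mul_one, mul_one]
  rcases ENNReal.ofReal_le_ofReal_iff'.mp hbound with h | h <;>
    linarith [le_abs_self C, abs_nonneg C]
end
end

section
/- Key computation in the counterexample: with F and G as defined, (E_k^{(1)} F)(x,y) = R_{k+1}(y) for all x ∈ [0, 2^{-n}) and k = 0, 1, …, n−1, and (Δ_k^{(2)} G)(x,y) = 1_{[0,2^{-n})}(x) R_{k+1}(y) for k = 0, 1, …, n−1; since R_{k+1}(y)^2 = 1 on [0,1), it follows that T_d(F,G) = n · 1_{[0,2^{-n}) × [0,1)}. -/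
/-!
Dyadic intervals of length `2^{-k}` are the level sets of `⌊2^k t⌋`, and `R_m` is a function of
`⌊2^k t⌋` once `m ≤ k`, so `E_k R_m = R_m` for `m ≤ k`. For `1 ≤ m` and `k < m` (any `k ∈ ℤ`),
`R_m` has mean zero on every dyadic interval of length `2^{-k}`, by splitting such an interval
down to length `2^{1-m}`. Hence `E_k^{(2)} G = 1_{[0,2^{-n})}(x) Σ_{m < n, m < k} R_{m+1}`, and
`Δ_k^{(2)} G` is the single term `1_{[0,2^{-n})}(x) R_{k+1}`.

For `F`, the integral over `[0,2^{-k})` telescopes: `[0,2^{-k})` splits into `[0,2^{-k-1})` and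
`[2^{-k-1},2^{-k})`, where `F = 2R_{k+1} - R_{k+2}`, so downward induction from `k = n-1` gives
`∫_0^{2^{-k}} F(·,y) = 2^{-k} R_{k+1}(y)`. In `T_d(F,G)` only `k = 0,…,n-1` survive, each
contributing `R_{k+1}^2 = 1_{[0,1)}` when `x ∈ [0,2^{-n})`.
-/

open MeasureTheory Set
open scoped Classical

noncomputable section

/-- The `k`-th Rademacher function on `[0,1)`:
`R_k = Σ_{J ⊆ [0,1), |J| = 2^{-k+1}} (1_{J_left} − 1_{J_right})`, extended by `0`. -/
def Rademacher (k : ℕ) (y : ℝ) : ℝ :=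
  if y ∈ Set.Ico (0:ℝ) 1 then (if ⌊(2:ℝ)^k * y⌋ % 2 = 0 then 1 else -1) else 0

/-- The counterexample function `G(x,y) = 1_{[0,2^{-n})}(x) Σ_{k=0}^{n-1} R_{k+1}(y)`. -/
def Gex (n : ℕ) (p : ℝ × ℝ) : ℝ :=
  (if p.1 ∈ Set.Ico (0:ℝ) ((2:ℝ)^(-(n:ℤ))) then 1 else 0) *
    ∑ k ∈ Finset.range n, Rademacher (k+1) p.2

/-- The counterexample function `F`, supported in `[0,1)²`, with
`F(x,y) = 2R_j(y) − R_{j+1}(y)` for `x ∈ [2^{-j}, 2^{-j+1})`, `j = 1,…,n−1`, and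
`F(x,y) = R_n(y)` for `x ∈ [0, 2^{-n+1})`. -/
def Fex (n : ℕ) (p : ℝ × ℝ) : ℝ :=
  if p.1 ∈ Set.Ico (0:ℝ) ((2:ℝ)^(1-(n:ℤ))) then Rademacher n p.2
  else if p.1 ∈ Set.Ico ((2:ℝ)^(1-(n:ℤ))) (1:ℝ) then
    2 * Rademacher ((-(Int.log 2 p.1)).toNat) p.2 -
      Rademacher ((-(Int.log 2 p.1)).toNat + 1) p.2
  else 0

lemma mem_dIco_iff_floor {k l : ℤ} {t : ℝ} : t ∈ dIco (-k) l ↔ ⌊(2:ℝ) ^ k * t⌋ = l := by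
  have h2k : (0:ℝ) < 2 ^ k := by positivity
  have ht : t = (2:ℝ) ^ (-k) * (2 ^ k * t) := by rw [zpow_neg, inv_mul_cancel_left₀ h2k.ne']
  rw [Int.floor_eq_iff, dIco, mem_Ico]
  conv_lhs => rw [ht]
  rw [mul_le_mul_iff_of_pos_left (by positivity), mul_lt_mul_iff_of_pos_left (by positivity)]

lemma volume_dIco (k l : ℤ) : volume (dIco k l) = ENNReal.ofReal ((2:ℝ) ^ k) := by
  rw [dIco, Real.volume_Ico]; ring_nf

lemma setIntegral_dIco_of_eqOn_const {f : ℝ → ℝ} {c : ℝ} {k l : ℤ}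
    (h : ∀ t ∈ dIco k l, f t = c) : ∫ t in dIco k l, f t = (2:ℝ) ^ k * c := by
  rw [setIntegral_congr_fun (s := dIco k l) measurableSet_Ico h, setIntegral_const,
    measureReal_def, volume_dIco, ENNReal.toReal_ofReal (by positivity), smul_eq_mul]

lemma integrableOn_dIco_of_eqOn_const {f : ℝ → ℝ} {c : ℝ} {k l : ℤ}
    (h : ∀ t ∈ dIco k l, f t = c) : IntegrableOn f (dIco k l) :=
  (integrableOn_const (by rw [volume_dIco]; exact ENNReal.ofReal_ne_top)).congr_fun
    (fun t ht => (h t ht).symm) (s := dIco k l) measurableSet_Ico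

lemma dIco_succ (j l : ℤ) : dIco (j + 1) l = dIco j (2 * l) ∪ dIco j (2 * l + 1) := by
  have h2j : (0:ℝ) < 2 ^ j := by positivity
  simp only [dIco, zpow_add_one₀ (two_ne_zero' ℝ), Int.cast_add, Int.cast_mul, Int.cast_ofNat,
    Int.cast_one]
  rw [Ico_union_Ico_eq_Ico (by gcongr; linarith) (by gcongr; linarith)]
  ring_nf

lemma disjoint_dIco_two_mul (j l : ℤ) : Disjoint (dIco j (2 * l)) (dIco j (2 * l + 1)) := by
  simp only [dIco, Int.cast_add, Int.cast_one]
  exact Ico_disjoint_Ico_same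

lemma setIntegral_dIco_succ {f : ℝ → ℝ} {j l : ℤ} (h₀ : IntegrableOn f (dIco j (2 * l)))
    (h₁ : IntegrableOn f (dIco j (2 * l + 1))) :
    ∫ t in dIco (j + 1) l, f t = (∫ t in dIco j (2 * l), f t) + ∫ t in dIco j (2 * l + 1), f t := by
  rw [dIco_succ, setIntegral_union (disjoint_dIco_two_mul j l) measurableSet_Ico h₀ h₁]

lemma Ek_eq_self {k : ℤ} {f : ℝ → ℝ}
    (hf : ∀ s t, ⌊(2:ℝ) ^ k * s⌋ = ⌊(2:ℝ) ^ k * t⌋ → f s = f t) (y : ℝ) : Ek k f y = f y := by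
  rw [Ek, setIntegral_dIco_of_eqOn_const (c := f y)
    (fun t ht => hf t y (mem_dIco_iff_floor.1 ht)), zpow_neg, mul_inv_cancel_left₀ (by positivity)]

lemma Ek_const_mul (k : ℤ) (c : ℝ) (f : ℝ → ℝ) (y : ℝ) :
    Ek k (fun v => c * f v) y = c * Ek k f y := by
  rw [Ek, Ek, integral_const_mul, mul_left_comm]

lemma Ek_finsetSum {ι : Type*} (s : Finset ι) {f : ι → ℝ → ℝ} (hf : ∀ i ∈ s, Integrable (f i))
    (k : ℤ) (y : ℝ) : Ek k (fun v => ∑ i ∈ s, f i v) y = ∑ i ∈ s, Ek k (f i) y := by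
  rw [Ek, integral_finsetSum s (fun i hi => (hf i hi).integrableOn), Finset.mul_sum]
  rfl

lemma floor_two_pow_mul_eq_ediv {a b : ℕ} (hab : a ≤ b) (y : ℝ) :
    ⌊(2:ℝ) ^ a * y⌋ = ⌊(2:ℝ) ^ b * y⌋ / 2 ^ (b - a) := by
  have h : (2:ℝ) ^ a * y = 2 ^ b * y / ((2 ^ (b - a) : ℕ) : ℝ) := by
    rw [eq_div_iff (by positivity), Nat.cast_pow, Nat.cast_ofNat, mul_right_comm, ← pow_add,
      Nat.add_sub_cancel' hab]
  rw [h, Int.floor_div_natCast]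
  push_cast
  rfl

lemma Rademacher_eq_ite_floor (m : ℕ) (y : ℝ) :
    Rademacher m y = if ⌊y⌋ = 0 then (if ⌊(2:ℝ) ^ m * y⌋ % 2 = 0 then 1 else -1) else 0 := by
  simp only [Rademacher, Int.floor_eq_zero_iff]

lemma Rademacher_congr {m k : ℕ} (hmk : m ≤ k) {s t : ℝ}
    (h : ⌊(2:ℝ) ^ k * s⌋ = ⌊(2:ℝ) ^ k * t⌋) : Rademacher m s = Rademacher m t := by
  have hfloor {a : ℕ} (ha : a ≤ k) : ⌊(2:ℝ) ^ a * s⌋ = ⌊(2:ℝ) ^ a * t⌋ := by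
    rw [floor_two_pow_mul_eq_ediv ha, floor_two_pow_mul_eq_ediv ha, h]
  have h₀ := hfloor (Nat.zero_le k)
  rw [pow_zero, one_mul, one_mul] at h₀
  rw [Rademacher_eq_ite_floor, Rademacher_eq_ite_floor, h₀, hfloor hmk]

lemma Rademacher_mul_self (m : ℕ) (y : ℝ) :
    Rademacher m y * Rademacher m y = (Ico (0:ℝ) 1).indicator 1 y := by
  unfold Rademacher
  split_ifs <;> simp_all

lemma integrable_Rademacher (m : ℕ) : Integrable (Rademacher m) := by
  have hparity : MeasurableSet {y : ℝ | ⌊(2:ℝ) ^ m * y⌋ % 2 = 0} :=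
    (measurable_from_top (f := fun z : ℤ => z % 2)).comp
      (Int.measurable_floor.comp (measurable_const_mul _)) (measurableSet_singleton 0)
  have hmeas : Measurable (Rademacher m) :=
    Measurable.ite measurableSet_Ico (Measurable.ite hparity measurable_const measurable_const)
      measurable_const
  refine Integrable.mono' (g := (Ico (0:ℝ) 1).indicator 1) ?_ hmeas.aestronglyMeasurable
    (Filter.Eventually.of_forall fun y => ?_)
  · exact (integrable_indicator_iff measurableSet_Ico).2
      (integrableOn_const (by simp))
  · unfold Rademacher
    split_ifs <;> simp_all

lemma setIntegral_dIco_Rademacher_eq_zero {m : ℕ} {j : ℤ} (hj : -(m:ℤ) ≤ j) (l : ℤ) :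
    ∫ t in dIco j l, Rademacher (m + 1) t = 0 := by
  have hint (s : Set ℝ) : IntegrableOn (Rademacher (m + 1)) s :=
    (integrable_Rademacher _).integrableOn
  induction j, hj using Int.leInduction generalizing l with
  | base =>
    -- On both halves of `dIco (-m) l` one has `⌊t⌋ = ⌊2^m t⌋ / 2^m = l / 2^m`, so the function
    -- is `1` on one half and `-1` on the other, or vanishes on both.
    have hval {l' : ℤ} {t : ℝ} (ht : t ∈ dIco (-((m + 1 : ℕ) : ℤ)) l')
        (htl : t ∈ dIco (-(m:ℤ)) l) : Rademacher (m + 1) t =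
          if l / 2 ^ m = 0 then (if l' % 2 = 0 then 1 else -1) else 0 := by
      rw [mem_dIco_iff_floor, zpow_natCast] at ht htl
      have h₀ := floor_two_pow_mul_eq_ediv (Nat.zero_le m) t
      rw [pow_zero, one_mul, Nat.sub_zero, htl] at h₀
      rw [Rademacher_eq_ite_floor, ht, h₀]
    have hsplit : -(m:ℤ) = -((m + 1 : ℕ) : ℤ) + 1 := by push_cast; ring
    have hhalf {l' : ℤ} (hl' : l' = 2 * l ∨ l' = 2 * l + 1) :
        dIco (-((m + 1 : ℕ) : ℤ)) l' ⊆ dIco (-(m:ℤ)) l := by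
      rw [hsplit, dIco_succ]
      rcases hl' with rfl | rfl
      exacts [subset_union_left, subset_union_right]
    rw [hsplit, setIntegral_dIco_succ (hint _) (hint _),
      setIntegral_dIco_of_eqOn_const fun t ht => hval ht (hhalf (.inl rfl) ht),
      setIntegral_dIco_of_eqOn_const fun t ht => hval ht (hhalf (.inr rfl) ht),
      if_pos (by omega : 2 * l % 2 = 0), if_neg (by omega : ¬ (2 * l + 1) % 2 = 0)]
    split_ifs <;> ring
  | succ j _ ih =>
    rw [setIntegral_dIco_succ (hint _) (hint _), ih, ih, add_zero]

lemma Ek_Rademacher (m : ℕ) (k : ℤ) (y : ℝ) :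
    Ek k (Rademacher (m + 1)) y = if (m:ℤ) < k then Rademacher (m + 1) y else 0 := by
  split_ifs with hmk
  · lift k to ℕ using by omega
    refine Ek_eq_self (fun s t hst => Rademacher_congr (k := k) (by omega) ?_) y
    simpa only [zpow_natCast] using hst
  · rw [Ek, setIntegral_dIco_Rademacher_eq_zero (by omega), mul_zero]

lemma Dk2_Gex (n : ℕ) (k : ℤ) (x y : ℝ) :
    Dk2 k (Gex n) (x, y) = (if x ∈ Ico (0:ℝ) ((2:ℝ) ^ (-(n:ℤ))) then 1 else 0) *
      ∑ m ∈ Finset.range n, if (m:ℤ) = k then Rademacher (m + 1) y else 0 := by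
  set c : ℝ := if x ∈ Ico (0:ℝ) ((2:ℝ) ^ (-(n:ℤ))) then 1 else 0
  have hGex : (fun v => Gex n (x, v)) = fun v => c * ∑ m ∈ Finset.range n, Rademacher (m + 1) v :=
    rfl
  have hEk (j : ℤ) : Ek2 j (Gex n) (x, y) =
      c * ∑ m ∈ Finset.range n, if (m:ℤ) < j then Rademacher (m + 1) y else 0 := by
    change Ek j (fun v => Gex n (x, v)) y = _
    rw [hGex, Ek_const_mul,
      Ek_finsetSum (f := fun m => Rademacher (m + 1)) _ fun m _ => integrable_Rademacher _]
    simp only [Ek_Rademacher]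
  rw [Dk2, hEk, hEk, ← mul_sub, ← Finset.sum_sub_distrib]
  congr 1
  refine Finset.sum_congr rfl fun m _ => ?_
  split_ifs <;> first | omega | ring

lemma Int.log_two_eq_of_mem_dIco_one {j : ℤ} {t : ℝ} (ht : t ∈ dIco j 1) : Int.log 2 t = j := by
  obtain ⟨hlo, hhi⟩ := ht
  push_cast at hlo hhi
  rw [mul_one] at hlo
  rw [one_add_one_eq_two, ← zpow_add_one₀ (two_ne_zero' ℝ)] at hhi
  have htpos : 0 < t := lt_of_lt_of_le (by positivity) hlo
  have h₁ := (Int.zpow_le_iff_le_log (b := 2) (by norm_num) htpos).1 (by exact_mod_cast hlo)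
  have h₂ := (Int.lt_zpow_iff_log_lt (b := 2) (by norm_num) htpos).1 (by exact_mod_cast hhi)
  omega

lemma Fex_of_mem_dIco_zero (n : ℕ) {t : ℝ} (ht : t ∈ dIco (1 - n) 0) (y : ℝ) :
    Fex n (t, y) = Rademacher n y := by
  simp only [dIco, Int.cast_zero, mul_zero, zero_add, mul_one] at ht
  exact if_pos ht

lemma Fex_of_mem_dIco_one {n j : ℕ} (hj : 1 ≤ j) (hjn : j < n) {t : ℝ} (ht : t ∈ dIco (-j) 1)
    (y : ℝ) : Fex n (t, y) = 2 * Rademacher j y - Rademacher (j + 1) y := by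
  have hlo : (2:ℝ) ^ (1 - (n:ℤ)) ≤ t := by
    refine le_trans (zpow_le_zpow_right₀ (by norm_num) (by omega : 1 - (n:ℤ) ≤ -j)) ?_
    simpa using ht.1
  have hhi : t < 1 := by
    refine lt_of_lt_of_le ht.2 ?_
    rw [Int.cast_one, one_add_one_eq_two, ← zpow_add_one₀ (two_ne_zero' ℝ)]
    exact zpow_le_one_of_nonpos₀ (by norm_num) (by omega)
  rw [Fex, if_neg fun h => (not_lt.2 hlo) h.2, if_pos ⟨hlo, hhi⟩,
    Int.log_two_eq_of_mem_dIco_one ht, neg_neg, Int.toNat_natCast]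

lemma integrableOn_and_setIntegral_Fex {n k : ℕ} (hk : k < n) (y : ℝ) :
    IntegrableOn (fun t => Fex n (t, y)) (dIco (-k) 0) ∧
      ∫ t in dIco (-k) 0, Fex n (t, y) = (2:ℝ) ^ (-(k:ℤ)) * Rademacher (k + 1) y := by
  obtain ⟨d, hd⟩ : ∃ d, k + d + 1 = n := ⟨n - k - 1, by omega⟩
  induction d generalizing k with
  | zero =>
    have hconst (t) (ht : t ∈ dIco (-k) 0) : Fex n (t, y) = Rademacher (k + 1) y := by
      rw [show -(k:ℤ) = 1 - n by omega] at ht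
      rw [Fex_of_mem_dIco_zero n ht y, ← hd]
    refine ⟨integrableOn_dIco_of_eqOn_const hconst, ?_⟩
    rw [setIntegral_dIco_of_eqOn_const hconst]
  | succ d ih =>
    obtain ⟨hintL, hvalL⟩ := ih (k := k + 1) (by omega) (by omega)
    have hconst (t) (ht : t ∈ dIco (-((k + 1 : ℕ) : ℤ)) 1) :
        Fex n (t, y) = 2 * Rademacher (k + 1) y - Rademacher (k + 2) y :=
      Fex_of_mem_dIco_one (by omega) (by omega) ht y
    have hintL' : IntegrableOn (fun t => Fex n (t, y)) (dIco (-((k + 1 : ℕ) : ℤ)) (2 * 0)) := by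
      rwa [mul_zero]
    have hintR : IntegrableOn (fun t => Fex n (t, y)) (dIco (-((k + 1 : ℕ) : ℤ)) (2 * 0 + 1)) := by
      rw [mul_zero, zero_add]
      exact integrableOn_dIco_of_eqOn_const hconst
    have hlevel : -(k:ℤ) = -((k + 1 : ℕ) : ℤ) + 1 := by push_cast; ring
    rw [hlevel]
    refine ⟨by rw [dIco_succ]; exact hintL'.union hintR, ?_⟩
    rw [setIntegral_dIco_succ hintL' hintR, mul_zero, zero_add, hvalL,
      setIntegral_dIco_of_eqOn_const hconst, zpow_add_one₀ (two_ne_zero' ℝ)]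
    ring

lemma Ek1_Fex {n k : ℕ} (hk : k < n) {x : ℝ} (hx : x ∈ Ico (0:ℝ) ((2:ℝ) ^ (-(n:ℤ)))) (y : ℝ) :
    Ek1 k (Fex n) (x, y) = Rademacher (k + 1) y := by
  have hfloor : ⌊(2:ℝ) ^ (k:ℤ) * x⌋ = 0 := by
    rw [← mem_dIco_iff_floor, dIco, Int.cast_zero, zero_add, mul_zero, mul_one]
    exact ⟨hx.1, hx.2.trans_le (zpow_le_zpow_right₀ (by norm_num) (by omega))⟩
  change Ek k (fun u => Fex n (u, y)) x = _
  rw [Ek, hfloor, (integrableOn_and_setIntegral_Fex hk y).2, ← mul_assoc,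
    ← zpow_add₀ (two_ne_zero' ℝ), add_neg_cancel, zpow_zero, one_mul]

lemma Dk2_Gex_of_lt {n k : ℕ} (hk : k < n) (x y : ℝ) :
    Dk2 k (Gex n) (x, y) =
      (if x ∈ Ico (0:ℝ) ((2:ℝ) ^ (-(n:ℤ))) then 1 else 0) * Rademacher (k + 1) y := by
  simp only [Dk2_Gex, Nat.cast_inj, Finset.sum_ite_eq', Finset.mem_range, if_pos hk]

lemma Ek1_Fex_mul_Dk2_Gex {n k : ℕ} (hk : k < n) (x y : ℝ) :
    Ek1 k (Fex n) (x, y) * Dk2 k (Gex n) (x, y) =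
      (Ico (0:ℝ) ((2:ℝ) ^ (-(n:ℤ))) ×ˢ Ico (0:ℝ) 1).indicator 1 (x, y) := by
  rw [Dk2_Gex_of_lt hk, indicator_prod_one]
  by_cases hx : x ∈ Ico (0:ℝ) ((2:ℝ) ^ (-(n:ℤ)))
  · rw [Ek1_Fex hk hx, if_pos hx, indicator_of_mem hx, Pi.one_apply, one_mul, one_mul,
      Rademacher_mul_self]
  · rw [if_neg hx, indicator_of_notMem hx, zero_mul, zero_mul, mul_zero]

theorem counterexample_computation_general (n : ℕ) :
    (∀ x ∈ Set.Ico (0:ℝ) ((2:ℝ)^(-(n:ℤ))), ∀ y : ℝ, ∀ k : ℕ, k < n →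
      Ek1 (k:ℤ) (Fex n) (x, y) = Rademacher (k+1) y) ∧
    (∀ x y : ℝ, ∀ k : ℕ, k < n →
      Dk2 (k:ℤ) (Gex n) (x, y) =
        (if x ∈ Set.Ico (0:ℝ) ((2:ℝ)^(-(n:ℤ))) then 1 else 0) * Rademacher (k+1) y) ∧
    (∀ p : ℝ × ℝ, Td (Fex n) (Gex n) p =
      n * Set.indicator (Set.Ico (0:ℝ) ((2:ℝ)^(-(n:ℤ))) ×ˢ Set.Ico (0:ℝ) 1)
        (fun _ => (1:ℝ)) p) := by
  refine ⟨fun x hx y k hk => Ek1_Fex hk hx y, fun x y k hk => Dk2_Gex_of_lt hk x y, ?_⟩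
  rintro ⟨x, y⟩
  have hsupp (k : ℤ) (hk : k ∉ (Finset.range n).map Nat.castEmbedding) :
      Ek1 k (Fex n) (x, y) * Dk2 k (Gex n) (x, y) = 0 := by
    rw [Dk2_Gex, Finset.sum_eq_zero fun m hm => if_neg ?_, mul_zero, mul_zero]
    rintro rfl
    exact hk (Finset.mem_map_of_mem _ hm)
  simp only [Td, tsum_eq_sum hsupp, Finset.sum_map, Nat.castEmbedding_apply]
  rw [← Pi.one_def,
    Finset.sum_congr rfl fun m hm => Ek1_Fex_mul_Dk2_Gex (Finset.mem_range.1 hm) x y,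
    Finset.sum_const, Finset.card_range, nsmul_eq_mul]

/-- **Key computation in the counterexample:** with `F = Fex n` and `G = Gex n`,
`(E_k^{(1)}F)(x,y) = R_{k+1}(y)` for `x ∈ [0,2^{-n})` and `k = 0,…,n−1`;
`(Δ_k^{(2)}G)(x,y) = 1_{[0,2^{-n})}(x) R_{k+1}(y)` for `k = 0,…,n−1`; and since
`R_{k+1}(y)² = 1` on `[0,1)`, `T_d(F,G) = n · 1_{[0,2^{-n}) × [0,1)}`. -/
theorem counterexample_computation (n : ℕ) (hn : 1 ≤ n) :
    (∀ x ∈ Set.Ico (0:ℝ) ((2:ℝ)^(-(n:ℤ))), ∀ y : ℝ, ∀ k : ℕ, k < n →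
      Ek1 (k:ℤ) (Fex n) (x, y) = Rademacher (k+1) y) ∧
    (∀ x y : ℝ, ∀ k : ℕ, k < n →
      Dk2 (k:ℤ) (Gex n) (x, y) =
        (if x ∈ Set.Ico (0:ℝ) ((2:ℝ)^(-(n:ℤ))) then 1 else 0) * Rademacher (k+1) y) ∧
    (∀ p : ℝ × ℝ, Td (Fex n) (Gex n) p =
      n * Set.indicator (Set.Ico (0:ℝ) ((2:ℝ)^(-(n:ℤ))) ×ˢ Set.Ico (0:ℝ) 1)
        (fun _ => (1:ℝ)) p) :=
  counterexample_computation_general n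
end
end
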